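/- Suppose (A, B, W) is a partition of V = {0,1}^n with μ(A) = (1 ± ε)/2, μ(W) ≤ ε n^{−β} where β = log₂(3/2), and |∇(A,B)| < (1+ε)2^{n−1}. Then for all but an O(ε)-fraction of x ∈ A, x has exactly one neighbor in B. -/

import Mathlib

open Finset

noncomputable def β : ℝ := Real.logb 2 (3/2)


def flipC {n : ℕ} (x : Fin n → Bool) (i : Fin n) : Fin n → Bool :=
  Function.update x i (!x i)

def nabla {n : ℕ} (A B : Finset (Fin n → Bool)) : ℕ :=
  ∑ x ∈ A, (univ.filter (fun i => flipC x i ∈ B)).card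

/-- `d_B(x)`: the number of neighbors of `x` in `B`. -/
def degIn {n : ℕ} (B : Finset (Fin n → Bool)) (x : Fin n → Bool) : ℕ :=
  (univ.filter (fun i => flipC x i ∈ B)).card

lemma beta_pos : 0 < β := Real.logb_pos one_lt_two (by norm_num)

lemma two_rpow_beta : (2:ℝ) ^ β = 3/2 :=
  Real.rpow_logb (by norm_num) (by norm_num) (by norm_num)

lemma beta_le_one : β ≤ 1 := by
  rw [β, Real.logb, div_le_one (Real.log_pos (by norm_num))]
  exact Real.log_le_log (by norm_num) (by norm_num)

lemma half_le_beta : 1/2 ≤ β := by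
  have h1 : ((2:ℝ) ^ ((1:ℝ)/2)) ^ 2 = 2 := by
    rw [← Real.rpow_natCast ((2:ℝ) ^ ((1:ℝ)/2)) 2, ← Real.rpow_mul (by norm_num)]
    norm_num
  have h2 : (2:ℝ) ^ ((1:ℝ)/2) ≤ (2:ℝ) ^ β := by
    rw [two_rpow_beta]
    nlinarith [Real.rpow_nonneg (by norm_num : (0:ℝ) ≤ 2) ((1:ℝ)/2)]
  exact (Real.rpow_le_rpow_left_iff (by norm_num : (1:ℝ) < 2)).mp h2

lemma four_rpow_beta : (4:ℝ) ^ β = 9/4 := by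
  have h : (4:ℝ) ^ β = ((2:ℝ) ^ β) ^ (2:ℕ) := by
    rw [show (4:ℝ) = (2:ℝ) ^ (2:ℕ) by norm_num, ← Real.rpow_natCast (2:ℝ) 2,
      ← Real.rpow_mul (by norm_num), mul_comm, Real.rpow_mul (by norm_num),
      Real.rpow_natCast]
  rw [h, two_rpow_beta]; norm_num

lemma concaveβ : ConcaveOn ℝ (Set.Ici 0) fun x : ℝ ↦ x ^ β :=
  Real.concaveOn_rpow beta_pos.le beta_le_one

/-- chord bound: `(1+y)^β ≥ 1 + y/2` for `y ∈ [0,1]`. -/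
lemma chord {y : ℝ} (h0 : 0 ≤ y) (h1 : y ≤ 1) : 1 + y/2 ≤ (1+y) ^ β := by
  have h := concaveβ.2 (Set.mem_Ici.2 (by norm_num : (0:ℝ) ≤ 1))
    (Set.mem_Ici.2 (by norm_num : (0:ℝ) ≤ 2)) (by linarith : 0 ≤ 1 - y) h0 (by ring)
  simp only [smul_eq_mul] at h
  have e1 : (1 - y) * 1 + y * 2 = 1 + y := by ring
  rw [e1, Real.one_rpow, two_rpow_beta] at h
  linarith

/-- secant bound: `2 x^β ≤ x + 1` for `x ≥ 2`. -/
lemma secant {x : ℝ} (hx : 2 ≤ x) : 2 * x ^ β ≤ x + 1 := by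
  have hd : (0:ℝ) < x - 1 := by linarith
  have ha : (0:ℝ) ≤ (x-2)/(x-1) := div_nonneg (by linarith) hd.le
  have hb : (0:ℝ) ≤ 1/(x-1) := by positivity
  have hab : (x-2)/(x-1) + 1/(x-1) = 1 := by field_simp; ring
  have h := concaveβ.2 (Set.mem_Ici.2 (by norm_num : (0:ℝ) ≤ 1))
    (Set.mem_Ici.2 (by linarith : (0:ℝ) ≤ x)) ha hb hab
  simp only [smul_eq_mul] at h
  have e1 : (x-2)/(x-1) * 1 + 1/(x-1) * x = 2 := by field_simp; ring
  rw [e1, Real.one_rpow, two_rpow_beta] at h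
  have h3 := mul_le_mul_of_nonneg_right h hd.le
  rw [add_mul, mul_one, div_mul_cancel₀ _ hd.ne'] at h3
  have e2 : 1/(x-1) * x ^ β * (x-1) = x ^ β := by field_simp
  rw [e2] at h3
  linarith

lemma rpow_le_self {x : ℝ} (hx : 1 ≤ x) : x ^ β ≤ x := by
  nth_rewrite 2 [← Real.rpow_one x]
  exact Real.rpow_le_rpow_of_exponent_le hx beta_le_one

lemma rpow_mono {x y : ℝ} (h0 : 0 ≤ x) (h : x ≤ y) : x ^ β ≤ y ^ β :=
  Real.rpow_le_rpow h0 h beta_pos.le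

lemma key1 {t : ℝ} (ht0 : 0 ≤ t) (ht : t ≤ 1/2) (h : ℕ) :
    (1 - 2*t^2) * (h:ℝ) ^ β + 2*t ≤ ((h:ℝ)+1) ^ β := by
  rcases Nat.eq_zero_or_pos h with rfl | hp
  · simp only [Nat.cast_zero, Real.zero_rpow beta_pos.ne', zero_add, Real.one_rpow, mul_zero]
    linarith
  · have hh : (1:ℝ) ≤ (h:ℝ) := by exact_mod_cast hp
    have hhp : (0:ℝ) < (h:ℝ) := by linarith
    set H := (h:ℝ) ^ β with hHdef
    have hH1 : 1 ≤ H := Real.one_le_rpow hh beta_pos.le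
    have hHsq : (h:ℝ) ≤ H^2 := by
      have : (h:ℝ) ^ (1:ℝ) ≤ (h:ℝ) ^ (β*2) :=
        Real.rpow_le_rpow_of_exponent_le hh (by linarith [half_le_beta])
      rw [Real.rpow_one] at this
      calc (h:ℝ) ≤ (h:ℝ) ^ (β*2) := this
        _ = H^2 := by
          rw [Real.rpow_mul (by positivity), hHdef, Real.rpow_two]
    have hch : 1 + (1/(h:ℝ))/2 ≤ (1+1/(h:ℝ)) ^ β :=
      chord (by positivity) (by rw [div_le_one hhp]; exact hh)
    have hsplit : ((h:ℝ)+1) ^ β = H * (1+1/(h:ℝ)) ^ β := by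
      rw [hHdef, ← Real.mul_rpow (by positivity) (by positivity)]
      congr 1
      field_simp
    have hlb : H + 1/(2*H) ≤ ((h:ℝ)+1) ^ β := by
      rw [hsplit]
      have h1 : H * (1 + (1/(h:ℝ))/2) ≤ H * (1+1/(h:ℝ)) ^ β :=
        mul_le_mul_of_nonneg_left hch (by positivity)
      have h2 : H + 1/(2*H) ≤ H * (1 + (1/(h:ℝ))/2) := by
        have : 1/(2*H) ≤ H/(2*(h:ℝ)) := by
          rw [div_le_div_iff₀ (by positivity) (by positivity)]
          nlinarith
        have e : H * (1 + (1/(h:ℝ))/2) = H + H/(2*(h:ℝ)) := by field_simp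
        rw [e]; linarith
      linarith
    have hfin : (1 - 2*t^2) * H + 2*t ≤ H + 1/(2*H) := by
      have hHpos : (0:ℝ) < H := by linarith
      have e : H + 1/(2*H) - ((1 - 2*t^2)*H + 2*t) = (2*t*H-1)^2/(2*H) := by
        field_simp; ring
      nlinarith [div_nonneg (sq_nonneg (2*t*H-1)) (by positivity : (0:ℝ) ≤ 2*H)]
    linarith

lemma key2 (h : ℕ) : (1/2) * (h:ℝ) ^ β + 1 ≤ ((h:ℝ)+1) ^ β := by
  match h with
  | 0 => simp [Real.zero_rpow beta_pos.ne', Real.one_rpow]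
  | 1 => norm_num [show ((1:ℕ):ℝ) + 1 = 2 by norm_num, two_rpow_beta, Real.one_rpow]
  | 2 =>
    have h3 : (15:ℝ)/8 ≤ (3:ℝ) ^ β := by
      have hc := chord (y := 1/2) (by norm_num) (by norm_num)
      have e2 : (1:ℝ) + 1/2 = 3/2 := by norm_num
      rw [e2] at hc
      rw [show (3:ℝ) = 2 * (3/2) by norm_num,
        Real.mul_rpow (by norm_num) (by norm_num), two_rpow_beta]
      nlinarith
    push_cast
    rw [show (2:ℝ) + 1 = 3 by norm_num, two_rpow_beta]
    linarith
  | 3 =>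
    have h4 : ((3:ℝ)+1) ^ β = 9/4 := by norm_num [four_rpow_beta]
    have h3 : (3:ℝ) ^ β ≤ 9/4 := by
      calc (3:ℝ) ^ β ≤ (4:ℝ) ^ β := rpow_mono (by norm_num) (by norm_num)
        _ = 9/4 := four_rpow_beta
    push_cast
    rw [h4]
    linarith
  | (k+4) =>
    have h2 : (2:ℝ) ≤ ((k:ℝ)+4) ^ β := by
      calc (2:ℝ) ≤ 9/4 := by norm_num
        _ = (4:ℝ) ^ β := four_rpow_beta.symm
        _ ≤ ((k:ℝ)+4) ^ β := rpow_mono (by norm_num) (by linarith [Nat.cast_nonneg (α := ℝ) k])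
    have h3 : ((k:ℝ)+4) ^ β ≤ ((k:ℝ)+4+1) ^ β := rpow_mono (by positivity) (by linarith)
    push_cast
    linarith

lemma count_ineq (d : ℕ) : (if d ≠ 1 then (1:ℝ) else 0) ≤ 1 + 3*(d:ℝ) - 4*(d:ℝ) ^ β := by
  match d with
  | 0 => norm_num [Real.zero_rpow beta_pos.ne']
  | 1 => norm_num [Real.one_rpow]
  | (k+2) =>
    have hk : (0:ℝ) ≤ (k:ℝ) := Nat.cast_nonneg k
    have hs := secant (x := (k:ℝ)+2) (by linarith)
    rw [if_pos (by omega : k+2 ≠ 1)]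
    push_cast
    nlinarith
section Cube

variable {n : ℕ}

/-- slice of a subset of the `(n+1)`-cube. -/
def slc (b : Bool) (S : Finset (Fin (n+1) → Bool)) : Finset (Fin n → Bool) :=
  univ.filter (fun y => Fin.cons b y ∈ S)

lemma mem_slc {b : Bool} {S : Finset (Fin (n+1) → Bool)} {y : Fin n → Bool} :
    y ∈ slc b S ↔ Fin.cons b y ∈ S := by simp [slc]

lemma slice_compl (b : Bool) (S : Finset (Fin (n+1) → Bool)) :
    slc b Sᶜ = (slc b S)ᶜ := by
  ext y; simp [slc]

lemma flip_cons_zero (b : Bool) (y : Fin n → Bool) :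
    flipC (Fin.cons b y) 0 = Fin.cons (!b) y := by
  rw [flipC, Fin.cons_zero, Fin.update_cons_zero]

lemma flip_cons_succ (b : Bool) (y : Fin n → Bool) (i : Fin n) :
    flipC (Fin.cons b y) i.succ = Fin.cons b (flipC y i) := by
  rw [flipC, Fin.cons_succ, flipC, Fin.cons_update]

lemma sum_cube {M : Type*} [AddCommMonoid M] (g : (Fin (n+1) → Bool) → M) :
    ∑ x, g x = (∑ y, g (Fin.cons false y)) + ∑ y, g (Fin.cons true y) := by
  rw [← (Fin.consEquiv (fun _ : Fin (n+1) => Bool)).sum_comp g]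
  rw [Fintype.sum_prod_type]
  rw [Fintype.sum_bool]
  rw [add_comm]
  rfl

lemma degIn_cons (B : Finset (Fin (n+1) → Bool)) (b : Bool) (y : Fin n → Bool) :
    degIn B (Fin.cons b y)
      = (if Fin.cons (!b) y ∈ B then 1 else 0) + degIn (slc b B) y := by
  rw [degIn, degIn, Finset.card_filter, Finset.card_filter, Fin.sum_univ_succ]
  congr 1
  · rw [flip_cons_zero]
  · apply Finset.sum_congr rfl
    intro i _
    rw [flip_cons_succ]
    simp [mem_slc]

lemma card_split (S : Finset (Fin (n+1) → Bool)) :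
    S.card = (slc false S).card + (slc true S).card := by
  have h : ∀ (T : Finset (Fin n → Bool)), T.card = ∑ y, (if y ∈ T then 1 else 0) := by
    intro T
    rw [Finset.sum_ite_mem, Finset.univ_inter, Finset.card_eq_sum_ones]
  rw [h (slc false S), h (slc true S),
    show S.card = ∑ x, (if x ∈ S then 1 else 0) from by
      rw [Finset.sum_ite_mem, Finset.univ_inter, Finset.card_eq_sum_ones],
    sum_cube (fun x => if x ∈ S then 1 else 0)]
  simp only [mem_slc]

end Cube

noncomputable def Fsum {n : ℕ} (S : Finset (Fin n → Bool)) : ℝ :=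
  ∑ x ∈ S, ((degIn Sᶜ x : ℝ)) ^ β

lemma Fsum_nonneg {n : ℕ} (S : Finset (Fin n → Bool)) : 0 ≤ Fsum S := by
  apply Finset.sum_nonneg
  intro x _
  positivity
lemma key1' {w N : ℝ} (hN : 0 < N) (hw0 : 0 ≤ w) (hw : 2*w ≤ N) (h : ℕ) :
    (N^2 - 2*w^2)*(h:ℝ)^β + 2*w*N ≤ N^2*((h:ℝ)+1)^β := by
  have ht0 : 0 ≤ w/N := by positivity
  have ht : w/N ≤ 1/2 := by rw [div_le_iff₀ hN]; linarith
  have k := key1 ht0 ht h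
  have e : (N^2-2*w^2)*(h:ℝ)^β + 2*w*N = N^2*((1-2*(w/N)^2)*(h:ℝ)^β + 2*(w/N)) := by
    field_simp
  rw [e]
  exact mul_le_mul_of_nonneg_left k (by positivity)

lemma pw {n : ℕ} (S : Finset (Fin (n+1) → Bool)) (b : Bool) (c m C : ℝ)
    (hc0 : 0 ≤ c) (hc : c ≤ C) (hm : 0 ≤ m)
    (H : ∀ h : ℕ, c*(h:ℝ)^β + m ≤ C*((h:ℝ)+1)^β) (y : Fin n → Bool) :
    (if y ∈ slc b S then c * ((degIn (slc b S)ᶜ y : ℝ)) ^ β else 0)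
      + (if y ∈ slc b S \ slc (!b) S then m else 0)
      ≤ (if Fin.cons b y ∈ S then C * ((degIn Sᶜ (Fin.cons b y) : ℝ)) ^ β else 0) := by
  by_cases hy : y ∈ slc b S
  · rw [if_pos hy, if_pos (mem_slc.mp hy)]
    have hdeg : degIn Sᶜ (Fin.cons b y)
        = (if Fin.cons (!b) y ∈ Sᶜ then 1 else 0) + degIn (slc b S)ᶜ y := by
      rw [degIn_cons, slice_compl]
    by_cases hy' : y ∈ slc (!b) S
    · rw [if_neg (by simp [Finset.mem_sdiff, hy'])]
      have h0 : Fin.cons (!b) y ∈ Sᶜ ↔ False := by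
        simp [Finset.mem_compl, mem_slc.mp hy']
      rw [hdeg, if_neg (by simp [mem_slc.mp hy']), zero_add, add_zero]
      have := Real.rpow_nonneg (Nat.cast_nonneg (degIn (slc b S)ᶜ y) : (0:ℝ) ≤ _) β
      nlinarith
    · rw [if_pos (Finset.mem_sdiff.mpr ⟨hy, hy'⟩)]
      have hmem : Fin.cons (!b) y ∈ Sᶜ := by
        rw [Finset.mem_compl]
        intro hcon
        exact hy' (mem_slc.mpr hcon)
      rw [hdeg, if_pos hmem]
      have := H (degIn (slc b S)ᶜ y)
      push_cast
      push_cast at this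
      calc c * (degIn (slc b S)ᶜ y : ℝ) ^ β + m ≤ C * ((degIn (slc b S)ᶜ y : ℝ) + 1) ^ β := this
        _ = C * (1 + (degIn (slc b S)ᶜ y : ℝ)) ^ β := by rw [add_comm]
  · rw [if_neg hy, if_neg (by simp [Finset.mem_sdiff, hy]),
      if_neg (fun hcon => hy (mem_slc.mpr hcon))]
    norm_num

lemma ite_sum_card {n : ℕ} (T : Finset (Fin n → Bool)) (m : ℝ) :
    ∑ y, (if y ∈ T then m else 0) = m * (T.card : ℝ) := by
  rw [Finset.sum_ite_mem, Finset.univ_inter, Finset.sum_const, nsmul_eq_mul, mul_comm]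

lemma ite_sum_F {n : ℕ} (T : Finset (Fin n → Bool)) (c : ℝ) :
    ∑ y, (if y ∈ T then c * ((degIn Tᶜ y : ℝ)) ^ β else 0) = c * Fsum T := by
  rw [Finset.sum_ite_mem, Finset.univ_inter, Fsum, Finset.mul_sum]

lemma sum_bound {n : ℕ} (S : Finset (Fin (n+1) → Bool)) (c₀ m₀ c₁ m₁ C : ℝ)
    (hc₀0 : 0 ≤ c₀) (hc₀ : c₀ ≤ C) (hc₁0 : 0 ≤ c₁) (hc₁ : c₁ ≤ C)
    (hm₀ : 0 ≤ m₀) (hm₁ : 0 ≤ m₁)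
    (H₀ : ∀ h : ℕ, c₀ * (h:ℝ)^β + m₀ ≤ C * ((h:ℝ)+1)^β)
    (H₁ : ∀ h : ℕ, c₁ * (h:ℝ)^β + m₁ ≤ C * ((h:ℝ)+1)^β) :
    c₀ * Fsum (slc false S) + m₀ * ((slc false S \ slc true S).card : ℝ)
      + (c₁ * Fsum (slc true S) + m₁ * ((slc true S \ slc false S).card : ℝ))
      ≤ C * Fsum S := by
  have hR : C * Fsum S
      = (∑ y, (if Fin.cons false y ∈ S then C * ((degIn Sᶜ (Fin.cons false y) : ℝ)) ^ β else 0))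
        + ∑ y, (if Fin.cons true y ∈ S then C * ((degIn Sᶜ (Fin.cons true y) : ℝ)) ^ β else 0) := by
    rw [← ite_sum_F S C, sum_cube (fun x => if x ∈ S then C * ((degIn Sᶜ x : ℝ)) ^ β else 0)]
  rw [hR, ← ite_sum_F (slc false S) c₀, ← ite_sum_F (slc true S) c₁,
    ← ite_sum_card (slc false S \ slc true S) m₀, ← ite_sum_card (slc true S \ slc false S) m₁,
    ← Finset.sum_add_distrib, ← Finset.sum_add_distrib]
  have h0 := pw S false c₀ m₀ C hc₀0 hc₀ hm₀ H₀
  have h1 := pw S true c₁ m₁ C hc₁0 hc₁ hm₁ H₁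
  simp only [Bool.not_false, Bool.not_true] at h0 h1
  exact add_le_add (Finset.sum_le_sum fun y _ => h0 y) (Finset.sum_le_sum fun y _ => h1 y)

lemma arith1 (N u v P Q s X : ℝ) (hN : 0 < N) (hP0 : 0 ≤ P)
    (hIH0 : 2*u*(N-u) ≤ N*P) (hIH1 : 2*v*(N-v) ≤ N*Q)
    (hs : u ≤ s + v) (hs0 : 0 ≤ s) (huv : v ≤ u) (hv0 : 0 ≤ v) (hw : 2*(u-v) ≤ N)
    (hSB : (N^2-2*(u-v)^2)*P + 2*(u-v)*N*s + N^2*Q ≤ N^2*X) :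
    2*(u+v)*(2*N-u-v) ≤ 2*N*X := by
  have hw0 : 0 ≤ u - v := by linarith
  have hc : 0 ≤ N^2 - 2*(u-v)^2 := by nlinarith
  have h1 : (N^2-2*(u-v)^2) * (2*u*(N-u)) ≤ (N^2-2*(u-v)^2) * (N*P) :=
    mul_le_mul_of_nonneg_left hIH0 hc
  have h2 : N^2*(2*v*(N-v)) ≤ N^2*(N*Q) :=
    mul_le_mul_of_nonneg_left hIH1 (by positivity)
  have h3 : 2*(u-v)*N*(u-v) ≤ 2*(u-v)*N*s :=
    mul_le_mul_of_nonneg_left (by linarith) (by positivity)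
  have h4 := mul_le_mul_of_nonneg_left hSB hN.le
  have h5 : N^2 * ((u+v)*(2*N-u-v)) ≤ N^2 * (N*X) := by
    nlinarith [sq_nonneg ((u-v)*(2*u-N))]
  have h6 := le_of_mul_le_mul_left h5 (by positivity : (0:ℝ) < N^2)
  nlinarith

lemma arith2 (N u v P Q s X : ℝ) (hN : 0 < N) (hQ0 : 0 ≤ Q)
    (hIH0 : 2*u*(N-u) ≤ N*P) (hIH1 : 2*v*(N-v) ≤ N*Q)
    (hs : u ≤ s + v) (hs0 : 0 ≤ s) (huv : v ≤ u) (hv0 : 0 ≤ v) (hu : u ≤ N)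
    (hw : N ≤ 2*(u-v)) (hSB : P + 2*s + 2*Q ≤ 2*X) :
    2*(u+v)*(2*N-u-v) ≤ 2*N*X := by
  have h4 := mul_le_mul_of_nonneg_left hSB hN.le
  have h5 : 0 ≤ v * (2*u - v - N) :=
    mul_nonneg hv0 (by linarith)
  nlinarith

set_option maxHeartbeats 1000000 in
theorem core : ∀ (n : ℕ) (S : Finset (Fin n → Bool)),
    2 * (S.card:ℝ) * (2^n - S.card) ≤ 2^n * Fsum S := by
  intro n
  induction n with
  | zero =>
    intro S
    have h1 : S.card ≤ 1 := by
      have := Finset.card_le_univ S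
      simpa using this
    have h2 : S.card = 0 ∨ S.card = 1 := by omega
    have h3 := Fsum_nonneg S
    rcases h2 with h | h <;> rw [h] <;> norm_num <;> linarith
  | succ n ih =>
    intro S
    have hNpos : (0:ℝ) < 2^n := by positivity
    set N : ℝ := 2^n with hN
    set u : ℝ := ((slc false S).card : ℝ) with hu
    set v : ℝ := ((slc true S).card : ℝ) with hv
    set P : ℝ := Fsum (slc false S) with hP
    set Q : ℝ := Fsum (slc true S) with hQ
    set X : ℝ := Fsum S with hX
    have hP0 : 0 ≤ P := Fsum_nonneg _
    have hQ0 : 0 ≤ Q := Fsum_nonneg _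
    have ih₀ : 2*u*(N-u) ≤ N*P := by
      rw [hu, hP, hN]; exact ih (slc false S)
    have ih₁ : 2*v*(N-v) ≤ N*Q := by
      rw [hv, hQ, hN]; exact ih (slc true S)
    have hu0 : 0 ≤ u := Nat.cast_nonneg _
    have hv0 : 0 ≤ v := Nat.cast_nonneg _
    have hcard : (S.card : ℝ) = u + v := by
      rw [hu, hv]; exact_mod_cast card_split S
    have huN : u ≤ N := by
      rw [hu, hN]
      have h := Finset.card_le_univ (slc false S)
      calc ((slc false S).card:ℝ) ≤ (Finset.univ.card : ℝ) := by exact_mod_cast h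
        _ = N := by rw [Finset.card_univ]; simp [hN]
    have hvN : v ≤ N := by
      rw [hv, hN]
      have h := Finset.card_le_univ (slc true S)
      calc ((slc true S).card:ℝ) ≤ (Finset.univ.card : ℝ) := by exact_mod_cast h
        _ = N := by rw [Finset.card_univ]; simp [hN]
    have hsd0 : u ≤ ((slc false S \ slc true S).card : ℝ) + v := by
      have hsub : slc false S ⊆ (slc false S \ slc true S) ∪ slc true S := by
        rw [Finset.sdiff_union_self_eq_union]; exact Finset.subset_union_left
      have := (Finset.card_le_card hsub).trans (Finset.card_union_le _ _)
      rw [hu, hv]; exact_mod_cast this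
    have hsd1 : v ≤ ((slc true S \ slc false S).card : ℝ) + u := by
      have hsub : slc true S ⊆ (slc true S \ slc false S) ∪ slc false S := by
        rw [Finset.sdiff_union_self_eq_union]; exact Finset.subset_union_left
      have := (Finset.card_le_card hsub).trans (Finset.card_union_le _ _)
      rw [hu, hv]; exact_mod_cast this
    have hgoal : 2*(u+v)*(2*N-u-v) ≤ 2*N*X → 2 * (S.card:ℝ) * (2^(n+1) - S.card) ≤ 2^(n+1) * X := by
      intro h
      rw [hcard, pow_succ]
      nlinarith [h]
    apply hgoal
    have hmono : ∀ (c : ℝ), 0 ≤ c → ∀ h : ℕ, c * (h:ℝ)^β + 0 ≤ c * ((h:ℝ)+1)^β := by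
      intro c hc h
      rw [add_zero]
      exact mul_le_mul_of_nonneg_left (rpow_mono (Nat.cast_nonneg h) (by linarith)) hc
    rcases le_total v u with huv | huv
    · rcases le_or_gt (2*(u-v)) N with hsmall | hbig
      · have hw0 : 0 ≤ u - v := by linarith
        have hc0 : 0 ≤ N^2 - 2*(u-v)^2 := by nlinarith
        have hSB := sum_bound S (N^2 - 2*(u-v)^2) (2*(u-v)*N) (N^2) 0 (N^2)
          hc0 (by nlinarith [sq_nonneg (u-v)]) (by positivity) le_rfl (by positivity) le_rfl
          (fun h => key1' hNpos hw0 hsmall h)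
          (fun h => hmono (N^2) (by positivity) h)
        exact arith1 N u v P Q ((slc false S \ slc true S).card : ℝ) X hNpos hP0 ih₀ ih₁ hsd0 (Nat.cast_nonneg _) huv hv0 hsmall
          (by linarith [hSB])
      · have hSB := sum_bound S 1 2 2 0 2
          (by norm_num) (by norm_num) (by norm_num) le_rfl (by norm_num) le_rfl
          (fun h => by have := key2 h; linarith)
          (fun h => hmono 2 (by norm_num) h)
        exact arith2 N u v P Q ((slc false S \ slc true S).card : ℝ) X hNpos hQ0 ih₀ ih₁ hsd0 (Nat.cast_nonneg _) huv hv0 huN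
          hbig.le (by linarith [hSB])
    · rcases le_or_gt (2*(v-u)) N with hsmall | hbig
      · have hw0 : 0 ≤ v - u := by linarith
        have hc0 : 0 ≤ N^2 - 2*(v-u)^2 := by nlinarith
        have hSB := sum_bound S (N^2) 0 (N^2 - 2*(v-u)^2) (2*(v-u)*N) (N^2)
          (by positivity) le_rfl hc0 (by nlinarith [sq_nonneg (v-u)]) le_rfl (by positivity)
          (fun h => hmono (N^2) (by positivity) h)
          (fun h => key1' hNpos hw0 hsmall h)
        have h := arith1 N v u Q P ((slc true S \ slc false S).card : ℝ) X hNpos hQ0 ih₁ ih₀ hsd1 (Nat.cast_nonneg _) huv hu0 hsmall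
          (by linarith [hSB])
        nlinarith [h]
      · have hSB := sum_bound S 2 0 1 2 2
          (by norm_num) le_rfl (by norm_num) (by norm_num) le_rfl (by norm_num)
          (fun h => hmono 2 (by norm_num) h)
          (fun h => by have := key2 h; linarith)
        have h := arith2 N v u Q P ((slc true S \ slc false S).card : ℝ) X hNpos hP0 ih₁ ih₀ hsd1 (Nat.cast_nonneg _) huv hu0 hvN
          hbig.le (by linarith [hSB])
        nlinarith [h]
lemma degIn_le {n : ℕ} (B : Finset (Fin n → Bool)) (x : Fin n → Bool) : degIn B x ≤ n := by
  rw [degIn]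
  exact le_trans (Finset.card_filter_le _ _) (by simp)

set_option maxHeartbeats 1000000 in
theorem one_neighbor_in_B :
    ∃ K ε₀ : ℝ, 0 < K ∧ 0 < ε₀ ∧
      ∀ ε : ℝ, 0 < ε → ε ≤ ε₀ →
      ∀ n : ℕ, ∀ A B W : Finset (Fin n → Bool),
        A ∪ B ∪ W = univ →
        Disjoint A B → Disjoint A W → Disjoint B W →
        |(A.card : ℝ) / 2 ^ n - 1/2| ≤ ε / 2 →
        (W.card : ℝ) / 2 ^ n ≤ ε * (n : ℝ) ^ (-β) →
        (nabla A B : ℝ) < (1 + ε) * (2 ^ n / 2) →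
        ((A.filter (fun x => degIn B x ≠ 1)).card : ℝ) ≤ K * ε * A.card := by
  refine ⟨100, 1/2, by norm_num, by norm_num, ?_⟩
  intro ε hε hε₀ n A B W hpart hAB hAW hBW habs hWμ hnab
  rcases Nat.eq_zero_or_pos n with rfl | hnpos
  · -- n = 0 : hypotheses are contradictory
    exfalso
    have hA1 : A.card ≤ 1 := by
      have := Finset.card_le_univ A
      simpa using this
    have habs' := abs_le.mp habs
    interval_cases h : A.card <;> norm_num at habs' <;> linarith
  · have hn1 : (1:ℝ) ≤ (n:ℝ) := by exact_mod_cast hnpos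
    set T : ℝ := 2^n with hT
    have hTpos : (0:ℝ) < T := by positivity
    set a : ℝ := (A.card : ℝ) with ha
    set w : ℝ := (W.card : ℝ) with hw
    have hw0 : 0 ≤ w := Nat.cast_nonneg _
    have ha0 : 0 ≤ a := Nat.cast_nonneg _
    -- complement of A ∪ W is B
    have hcompl : (A ∪ W)ᶜ = B := by
      ext x
      simp only [Finset.mem_compl, Finset.mem_union]
      constructor
      · intro hx
        have hx2 : x ∈ A ∪ B ∪ W := by rw [hpart]; exact Finset.mem_univ x
        simp only [Finset.mem_union] at hx2
        tauto
      · intro hx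
        push_neg
        exact ⟨fun hA => Finset.disjoint_left.mp hAB hA hx,
          fun hW => Finset.disjoint_left.mp hBW hx hW⟩
    -- the core isoperimetric bound
    have hcore := core n (A ∪ W)
    have hm : ((A ∪ W).card : ℝ) = a + w := by
      rw [Finset.card_union_of_disjoint hAW]; push_cast; rfl
    set m : ℝ := a + w with hmdef
    rw [hm] at hcore
    have hFsplit : Fsum (A ∪ W)
        = (∑ x ∈ A, ((degIn B x : ℝ)) ^ β) + ∑ x ∈ W, ((degIn B x : ℝ)) ^ β := by
      rw [Fsum, hcompl, Finset.sum_union hAW]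
    set Sβ : ℝ := ∑ x ∈ A, ((degIn B x : ℝ)) ^ β with hSβ
    set S1 : ℝ := ∑ x ∈ A, ((degIn B x : ℝ)) with hS1
    have hSβ0 : 0 ≤ Sβ := Finset.sum_nonneg fun x _ => by positivity
    -- the W part is small
    have hWpart : ∑ x ∈ W, ((degIn B x : ℝ)) ^ β ≤ w * (n:ℝ)^β := by
      have hb : ∀ x ∈ W, ((degIn B x : ℝ)) ^ β ≤ (n:ℝ)^β := by
        intro x _
        exact rpow_mono (Nat.cast_nonneg _) (by exact_mod_cast degIn_le B x)
      calc ∑ x ∈ W, ((degIn B x : ℝ)) ^ β ≤ ∑ _x ∈ W, (n:ℝ)^β := Finset.sum_le_sum hb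
        _ = w * (n:ℝ)^β := by rw [Finset.sum_const, nsmul_eq_mul]
    -- n^β * w ≤ ε * T
    have hnβpos : (0:ℝ) < (n:ℝ)^β := Real.rpow_pos_of_pos (by linarith) β
    have hwT : w ≤ ε * (n:ℝ)^(-β) * T := by
      rw [hw]
      have := (div_le_iff₀ hTpos).mp hWμ
      exact this
    have hnbmul : (n:ℝ)^(-β) * (n:ℝ)^β = 1 := by
      rw [← Real.rpow_add (by linarith : (0:ℝ) < (n:ℝ))]
      norm_num
    have hwnβ : w * (n:ℝ)^β ≤ ε * T := by
      calc w * (n:ℝ)^β ≤ (ε * (n:ℝ)^(-β) * T) * (n:ℝ)^β :=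
            mul_le_mul_of_nonneg_right hwT hnβpos.le
        _ = ε * T * ((n:ℝ)^(-β) * (n:ℝ)^β) := by ring
        _ = ε * T := by rw [hnbmul, mul_one]
    -- lower bound for Sβ
    have hSβlb : T^2/2 - (9/4)*ε*T^2 - ε*T^2 ≤ T * Sβ := by
      have h1 : 2*m*(T-m) ≤ T * (Sβ + (w * (n:ℝ)^β)) := by
        calc 2*m*(T-m) ≤ T * Fsum (A ∪ W) := hcore
          _ ≤ T * (Sβ + (w * (n:ℝ)^β)) := by
              rw [hFsplit]
              exact mul_le_mul_of_nonneg_left (by linarith [hWpart]) hTpos.le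
      -- bounds on m
      have habs' := abs_le.mp habs
      have hau : a ≤ (1/2 + ε/2) * T := by
        have := (div_le_iff₀ hTpos).mp (by linarith [habs'.2] : a/T ≤ 1/2 + ε/2)
        linarith
      have hal : (1/2 - ε/2) * T ≤ a := by
        have := (le_div_iff₀ hTpos).mp (by linarith [habs'.1] : 1/2 - ε/2 ≤ a/T)
        linarith
      have hwup : w ≤ ε * T := by
        have hnb1 : (n:ℝ)^(-β) ≤ 1 :=
          Real.rpow_le_one_of_one_le_of_nonpos hn1 (by linarith [beta_pos])
        calc w ≤ ε * (n:ℝ)^(-β) * T := hwT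
          _ ≤ ε * 1 * T := by
              apply mul_le_mul_of_nonneg_right _ hTpos.le
              exact mul_le_mul_of_nonneg_left hnb1 hε.le
          _ = ε * T := by ring
      have hmu : m - T/2 ≤ (3/2)*ε*T := by rw [hmdef]; linarith
      have hml : -((3/2)*ε*T) ≤ m - T/2 := by rw [hmdef]; nlinarith
      have hsq : (m - T/2)^2 ≤ (9/4)*ε^2*T^2 := by
        nlinarith [mul_nonneg (by linarith : (0:ℝ) ≤ (3/2)*ε*T - (m - T/2))
          (by linarith : (0:ℝ) ≤ (3/2)*ε*T + (m - T/2))]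
      have hεsq : ε^2 ≤ ε/2 := by nlinarith
      nlinarith [h1, hwnβ, hsq, hTpos.le]
    -- counting bad points
    have hcount : ((A.filter (fun x => degIn B x ≠ 1)).card : ℝ) ≤ a + 3*S1 - 4*Sβ := by
      have hc1 : ((A.filter (fun x => degIn B x ≠ 1)).card : ℝ)
          = ∑ x ∈ A, (if degIn B x ≠ 1 then (1:ℝ) else 0) := by
        rw [Finset.card_filter]
        push_cast
        rfl
      rw [hc1]
      have hc2 : ∑ x ∈ A, (if degIn B x ≠ 1 then (1:ℝ) else 0)
          ≤ ∑ x ∈ A, (1 + 3*(degIn B x : ℝ) - 4*((degIn B x : ℝ))^β) :=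
        Finset.sum_le_sum fun x _ => count_ineq (degIn B x)
      have hc3 : ∑ x ∈ A, (1 + 3*(degIn B x : ℝ) - 4*((degIn B x : ℝ))^β)
          = a + 3*S1 - 4*Sβ := by
        rw [Finset.sum_sub_distrib, Finset.sum_add_distrib, ← Finset.mul_sum,
          ← Finset.mul_sum, Finset.sum_const, nsmul_eq_mul, mul_one, hS1, hSβ, ha]
      linarith
    -- nabla bound
    have hS1nab : S1 = (nabla A B : ℝ) := by
      rw [hS1, nabla]
      push_cast
      rfl
    have hS1ub : S1 < (1+ε) * (T/2) := by rw [hS1nab, hT]; exact hnab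
    -- final arithmetic
    have hSβlb' : T/2 - (13/4)*ε*T ≤ Sβ := by
      have := hSβlb
      have h2 : T * (T/2 - (13/4)*ε*T) ≤ T * Sβ := by nlinarith
      exact le_of_mul_le_mul_left h2 hTpos
    have habs' := abs_le.mp habs
    have hau : a ≤ (1/2 + ε/2) * T := by
      have := (div_le_iff₀ hTpos).mp (by linarith [habs'.2] : a/T ≤ 1/2 + ε/2)
      linarith
    have hal : (1/2 - ε/2) * T ≤ a := by
      have := (le_div_iff₀ hTpos).mp (by linarith [habs'.1] : 1/2 - ε/2 ≤ a/T)
      linarith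
    have hTa : T ≤ 4*a := by
      nlinarith [mul_le_mul_of_nonneg_right hε₀ hTpos.le]
    calc ((A.filter (fun x => degIn B x ≠ 1)).card : ℝ) ≤ a + 3*S1 - 4*Sβ := hcount
      _ ≤ 25 * ε * T := by linarith [hau, hS1ub, hSβlb']
      _ ≤ 100 * ε * a := by nlinarith [mul_nonneg hε.le (sub_nonneg.2 hTa)]
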